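/- If f : ℝ → ℝ is continuous and there exists a function F : ℝ → ℝ such that for every compactly supported probability measure μ on ℝ, ∫ f dμ = F(∫ y dμ(y)), then f is affine, i.e., there exist a, b ∈ ℝ with f(x) = a*x + b for all x. -/

import Mathlib

/-!
Testing the hypothesis on a Dirac mass `δ x` gives `F = f`. Testing it on `(δ x + δ y) / 2`,
whose mean is the midpoint of `x` and `y`, then shows that `f` maps midpoints to midpoints;
a continuous map with this property is affine.
-/

open MeasureTheory
open scoped ENNReal

theorem AffineMap.apply_eq_linear_one_mul_add {k : Type*} [Field k] (g : k →ᵃ[k] k) (x : k) :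
    g x = g.linear 1 * x + g 0 := by
  have hlin : g.linear x = g x - g 0 := by simpa using g.linearMap_vsub x 0
  have hsmul : g.linear x = x * g.linear 1 := by simpa using g.linear.map_smul x 1
  rw [mul_comm, ← hsmul, hlin, sub_add_cancel]

section HalfDiracSum

variable {α : Type*} [MeasurableSpace α] [MeasurableSingletonClass α]

instance isProbabilityMeasure_half_smul_dirac_add (x y : α) :
    IsProbabilityMeasure ((2⁻¹ : ℝ≥0∞) • (Measure.dirac x + Measure.dirac y)) :=
  ⟨by simp [ENNReal.inv_two_add_inv_two]⟩

theorem integral_half_smul_dirac_add {E : Type*} [NormedAddCommGroup E] [NormedSpace ℝ E]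
    [CompleteSpace E] (g : α → E) (x y : α) :
    ∫ z, g z ∂((2⁻¹ : ℝ≥0∞) • (Measure.dirac x + Measure.dirac y)) = midpoint ℝ (g x) (g y) := by
  rw [integral_smul_measure, integral_add_measure (integrable_dirac enorm_lt_top)
    (integrable_dirac enorm_lt_top), integral_dirac, integral_dirac, midpoint_eq_smul_add]
  simp

theorem half_smul_dirac_add_apply_pair_compl (x y : α) :
    ((2⁻¹ : ℝ≥0∞) • (Measure.dirac x + Measure.dirac y)) ({x, y} : Set α)ᶜ = 0 := by
  simp

end HalfDiracSum

theorem stmt0 (f : ℝ → ℝ) (hf : Continuous f) (F : ℝ → ℝ)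
    (h : ∀ μ : Measure ℝ, IsProbabilityMeasure μ →
      (∃ K : Set ℝ, IsCompact K ∧ μ Kᶜ = 0) →
      ∫ x, f x ∂μ = F (∫ y, y ∂μ)) :
    ∃ a b : ℝ, ∀ x, f x = a * x + b := by
  have hF : ∀ x, F x = f x := fun x => by
    simpa using (h (Measure.dirac x) inferInstance ⟨{x}, isCompact_singleton, by simp⟩).symm
  have hmid : ∀ x y, f (midpoint ℝ x y) = midpoint ℝ (f x) (f y) := fun x y => by
    have := h _ inferInstance
      ⟨{x, y}, (Set.toFinite _).isCompact, half_smul_dirac_add_apply_pair_compl x y⟩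
    rwa [integral_half_smul_dirac_add, integral_half_smul_dirac_add (fun y => y), hF,
      eq_comm] at this
  let g := AffineMap.ofMapMidpoint f hmid hf
  exact ⟨g.linear 1, g 0, g.apply_eq_linear_one_mul_add⟩
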